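/- Fix L ≥ 1, σ > 0, segments y_0, …, y_{N_d−1} ∈ ℝ^L, nonnegative weights w_m[l] for 0 ≤ l ≤ 2L−1 and v_m[l₁, l₂] for L+1 ≤ l₁ ≤ 2L−1, 1 ≤ l₂ ≤ l₁−L. Define F(x) = Σ_m ( Σ_{l=0}^{2L−1} w_m[l] g_l^{(m)}(x) + Σ_{l₁=L+1}^{2L−1} Σ_{l₂=1}^{l₁−L} v_m[l₁, l₂] h_{l₁,l₂}^{(m)}(x) ), where g_l^{(m)}(x) = −(1/(2σ²)) Σ_{i=0}^{L−1} ( y_m[i] − (Zx)[(i+l) mod 2L] )² and h_{l₁,l₂}^{(m)}(x) = −(1/(2σ²)) Σ_{i=0}^{L−1} ( y_m[i] − (Zx)[(i+l₁) mod 2L] − (Zx)[(i+l₂) mod 2L] )². If for every 0 ≤ j ≤ L−1 the denominator D_j = Σ_m ( Σ_{l=j+1}^{j+L} w_m[l] + Σ_{l₁=L+1}^{j+L} Σ_{l₂=1}^{l₁−L} v_m[l₁, l₂] + Σ_{l₁=L+j+1}^{2L−1} Σ_{l₂=j+1}^{l₁−L} v_m[l₁, l₂] ) is strictly positive, then F is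 a concave quadratic function of x with a unique global maximizer x* given coordinatewise by x*[j] = [ Σ_m ( Σ_{l=j+1}^{j+L} w_m[l] y_m[j+L−l] + Σ_{l₁=L+1}^{j+L} Σ_{l₂=1}^{l₁−L} v_m[l₁, l₂] y_m[j+L−l₁] + Σ_{l₁=L+j+1}^{2L−1} Σ_{l₂=j+1}^{l₁−L} v_m[l₁, l₂] y_m[j+L−l₂] ) ] / D_j. -/

import Mathlib

/-- Left zero-padding `Z : ℝ^L → ℝ^{2L}`: `(Zx)[i] = 0` for `0 ≤ i ≤ L−1` and
`(Zx)[i] = x[i−L]` for `L ≤ i ≤ 2L−1` (represented on `ℕ`, zero elsewhere). -/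
noncomputable def Zpad (L : ℕ) (x : Fin L → ℝ) : ℕ → ℝ :=
  fun i => if h : L ≤ i ∧ i < 2 * L then x ⟨i - L, by omega⟩ else 0

/-- Single-occurrence log-likelihood term
`g_l^{(m)}(x) = −(1/(2σ²)) Σ_{i=0}^{L−1} ( y_m[i] − (Zx)[(i+l) mod 2L] )²`. -/
noncomputable def loglik1 (L : ℕ) (σ : ℝ) (ym : ℕ → ℝ) (l : ℕ) (x : Fin L → ℝ) : ℝ :=
  -(1 / (2 * σ ^ 2)) * ∑ i ∈ Finset.range L, (ym i - Zpad L x ((i + l) % (2 * L))) ^ 2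

/-- Double-occurrence log-likelihood term `h_{l₁,l₂}^{(m)}(x) =
−(1/(2σ²)) Σ_{i=0}^{L−1} ( y_m[i] − (Zx)[(i+l₁) mod 2L] − (Zx)[(i+l₂) mod 2L] )²`. -/
noncomputable def loglik2 (L : ℕ) (σ : ℝ) (ym : ℕ → ℝ) (l₁ l₂ : ℕ) (x : Fin L → ℝ) : ℝ :=
  -(1 / (2 * σ ^ 2)) * ∑ i ∈ Finset.range L,
    (ym i - Zpad L x ((i + l₁) % (2 * L)) - Zpad L x ((i + l₂) % (2 * L))) ^ 2

/-- The M-step objective of the approximate EM algorithm (arbitrary spacing distribution):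
`F(x) = Σ_m ( Σ_{l<2L} w_m[l] g_l^{(m)}(x)
+ Σ_{l₁=L+1}^{2L−1} Σ_{l₂=1}^{l₁−L} v_m[l₁,l₂] h_{l₁,l₂}^{(m)}(x) )`. -/
noncomputable def emObjective (L : ℕ) (σ : ℝ) (Nd : ℕ) (y : ℕ → ℕ → ℝ)
    (w : ℕ → ℕ → ℝ) (v : ℕ → ℕ → ℕ → ℝ) (x : Fin L → ℝ) : ℝ :=
  ∑ m ∈ Finset.range Nd,
    ((∑ l ∈ Finset.range (2 * L), w m l * loglik1 L σ (y m) l x)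
      + ∑ l₁ ∈ Finset.Icc (L + 1) (2 * L - 1), ∑ l₂ ∈ Finset.Icc 1 (l₁ - L),
          v m l₁ l₂ * loglik2 L σ (y m) l₁ l₂ x)

/-- The denominator `D_j = Σ_m ( Σ_{l=j+1}^{j+L} w_m[l]
+ Σ_{l₁=L+1}^{j+L} Σ_{l₂=1}^{l₁−L} v_m[l₁,l₂]
+ Σ_{l₁=L+j+1}^{2L−1} Σ_{l₂=j+1}^{l₁−L} v_m[l₁,l₂] )`. -/
noncomputable def emDenom (L : ℕ) (Nd : ℕ) (w : ℕ → ℕ → ℝ) (v : ℕ → ℕ → ℕ → ℝ)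
    (j : ℕ) : ℝ :=
  ∑ m ∈ Finset.range Nd,
    ((∑ l ∈ Finset.Icc (j + 1) (j + L), w m l)
      + (∑ l₁ ∈ Finset.Icc (L + 1) (j + L), ∑ l₂ ∈ Finset.Icc 1 (l₁ - L), v m l₁ l₂)
      + ∑ l₁ ∈ Finset.Icc (L + j + 1) (2 * L - 1), ∑ l₂ ∈ Finset.Icc (j + 1) (l₁ - L),
          v m l₁ l₂)

/-- The numerator `Σ_m ( Σ_{l=j+1}^{j+L} w_m[l] y_m[j+L−l]
+ Σ_{l₁=L+1}^{j+L} Σ_{l₂=1}^{l₁−L} v_m[l₁,l₂] y_m[j+L−l₁]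
+ Σ_{l₁=L+j+1}^{2L−1} Σ_{l₂=j+1}^{l₁−L} v_m[l₁,l₂] y_m[j+L−l₂] )`. -/
noncomputable def emNumer (L : ℕ) (Nd : ℕ) (y : ℕ → ℕ → ℝ) (w : ℕ → ℕ → ℝ)
    (v : ℕ → ℕ → ℕ → ℝ) (j : ℕ) : ℝ :=
  ∑ m ∈ Finset.range Nd,
    ((∑ l ∈ Finset.Icc (j + 1) (j + L), w m l * y m (j + L - l))
      + (∑ l₁ ∈ Finset.Icc (L + 1) (j + L), ∑ l₂ ∈ Finset.Icc 1 (l₁ - L),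
          v m l₁ l₂ * y m (j + L - l₁))
      + ∑ l₁ ∈ Finset.Icc (L + j + 1) (2 * L - 1), ∑ l₂ ∈ Finset.Icc (j + 1) (l₁ - L),
          v m l₁ l₂ * y m (j + L - l₂))

/-!
Within a segment, the occurrence at shift `l` puts `x[j]` on sample `j + L - l`, and the two
occurrences of a double placement never cover the same sample (`l₂ ≤ l₁ - L`), so
`(y - a - b)² = y² - (2ya - a²) - (2yb - b²)` whenever one of `a, b` vanishes. Expanding every
residual this way and regrouping by the coordinate each sample sees gives
`F(x) = C + (1/(2σ²)) Σ_j (2 N_j x_j - D_j x_j²)`, and completing the square,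
`F(x) = C' - (1/(2σ²)) Σ_j D_j (x_j - N_j / D_j)²`. With every `D_j > 0` this is a concave
function with the single maximizer `x*[j] = N_j / D_j`.
-/

open Finset

section SeparableQuadratic

variable {ι : Type*} [Fintype ι] {f : (ι → ℝ) → ℝ} {C : ℝ} {a b : ι → ℝ}

lemma concaveOn_of_eq_const_sub_sum_mul_sq (hf : ∀ x, f x = C - ∑ i, a i * (x i - b i) ^ 2)
    (ha : ∀ i, 0 ≤ a i) : ConcaveOn ℝ Set.univ f := by
  have hterm (i : ι) : ConvexOn ℝ Set.univ fun x : ι → ℝ => a i * (x i - b i) ^ 2 := by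
    have := (((even_two.convexOn_pow (𝕜 := ℝ)).translate_right (-b i)).smul (ha i)).comp_linearMap
        (LinearMap.proj (R := ℝ) (φ := fun _ : ι => ℝ) i)
    simpa [Function.comp_def, sub_eq_neg_add] using this
  have hsum : ConvexOn ℝ Set.univ fun x : ι → ℝ => ∑ i, a i * (x i - b i) ^ 2 := by
    have := sum_induction (s := univ) (fun i (x : ι → ℝ) => a i * (x i - b i) ^ 2)
      (ConvexOn ℝ Set.univ) (fun _ _ => ConvexOn.add) (convexOn_const 0 convex_univ)
      fun i _ => hterm i
    rwa [sum_fn] at this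
  rw [show f = _ from funext hf]
  exact (concaveOn_const C convex_univ).sub hsum

lemma le_of_eq_const_sub_sum_mul_sq (hf : ∀ x, f x = C - ∑ i, a i * (x i - b i) ^ 2)
    (ha : ∀ i, 0 ≤ a i) (x : ι → ℝ) : f x ≤ f b := by
  rw [hf, hf]
  simpa using sum_nonneg fun i _ => mul_nonneg (ha i) (sq_nonneg (x i - b i))

lemma eq_of_eq_const_sub_sum_mul_sq (hf : ∀ x, f x = C - ∑ i, a i * (x i - b i) ^ 2)
    (ha : ∀ i, 0 < a i) {x : ι → ℝ} (hx : f b ≤ f x) : x = b := by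
  rw [hf, hf] at hx
  have hterm (i : ι) : 0 ≤ a i * (x i - b i) ^ 2 := mul_nonneg (ha i).le (sq_nonneg _)
  have hzero : ∑ i, a i * (x i - b i) ^ 2 = 0 :=
    le_antisymm (by simpa using hx) (sum_nonneg fun i _ => hterm i)
  funext i
  have hi := (sum_eq_zero_iff_of_nonneg fun i _ => hterm i).mp hzero i (mem_univ i)
  rw [mul_eq_zero, pow_eq_zero_iff two_ne_zero, sub_eq_zero] at hi
  exact hi.resolve_left (ha i).ne'

end SeparableQuadratic

lemma Zpad_eq_zero_of_lt {L i : ℕ} (x : Fin L → ℝ) (hi : i < L) : Zpad L x i = 0 :=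
  dif_neg fun h => by omega

lemma Zpad_val_add {L : ℕ} (x : Fin L → ℝ) (j : Fin L) : Zpad L x (j + L) = x j := by
  rw [Zpad, dif_pos (by omega)]
  congr
  simp

lemma Zpad_shift_mod_eq_zero {L i l : ℕ} (x : Fin L → ℝ) (hi : i < L) (hl : l < 2 * L)
    (h : ¬(L ≤ i + l ∧ i + l < 2 * L)) : Zpad L x ((i + l) % (2 * L)) = 0 := by
  apply Zpad_eq_zero_of_lt
  rcases lt_or_ge (i + l) (2 * L) with h2 | h2
  · rw [Nat.mod_eq_of_lt h2]; omega
  · rw [Nat.mod_eq_sub_mod h2, Nat.mod_eq_of_lt (by omega)]; omega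

lemma sum_Zpad_shift {L l : ℕ} (hl : l < 2 * L) (x : Fin L → ℝ) (φ : ℕ → ℝ → ℝ)
    (hφ : ∀ i, φ i 0 = 0) :
    ∑ i ∈ range L, φ i (Zpad L x ((i + l) % (2 * L))) =
      ∑ j : Fin L, if (j : ℕ) + 1 ≤ l ∧ l ≤ j + L then φ (j + L - l) (x j) else 0 := by
  calc ∑ i ∈ range L, φ i (Zpad L x ((i + l) % (2 * L)))
      = ∑ i ∈ range L with L ≤ i + l ∧ i + l < 2 * L, φ i (Zpad L x (i + l)) := by
        rw [sum_filter]
        refine sum_congr rfl fun i hi => ?_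
        split_ifs with h
        · rw [Nat.mod_eq_of_lt h.2]
        · rw [Zpad_shift_mod_eq_zero x (mem_range.mp hi) hl h, hφ]
    _ = ∑ j ∈ range L with j + 1 ≤ l ∧ l ≤ j + L, φ (j + L - l) (Zpad L x (j + L)) := by
        apply sum_nbij' (· + l - L) (· + L - l)
        all_goals intro i hi
        all_goals simp only [mem_filter, mem_range] at hi ⊢
        · omega
        · omega
        · omega
        · omega
        · rw [show i + l - L + L - l = i by omega, show i + l - L + L = i + l by omega]
    _ = _ := by
        rw [sum_filter, sum_range]
        simp only [Zpad_val_add]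

lemma sum_sum_Zpad_shift {L : ℕ} (s : Finset ℕ) (hs : ∀ l ∈ s, l < 2 * L) (x : Fin L → ℝ)
    (φ : ℕ → ℕ → ℝ → ℝ) (hφ : ∀ l i, φ l i 0 = 0) :
    ∑ l ∈ s, ∑ i ∈ range L, φ l i (Zpad L x ((i + l) % (2 * L))) =
      ∑ j : Fin L, ∑ l ∈ s with (j : ℕ) + 1 ≤ l ∧ l ≤ j + L, φ l (j + L - l) (x j) := by
  rw [sum_congr rfl fun l hl => sum_Zpad_shift (hs l hl) x (φ l) (hφ l), sum_comm]
  simp only [sum_filter]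

lemma Zpad_shift_mul_Zpad_shift_eq_zero {L i l₁ l₂ : ℕ} (x : Fin L → ℝ) (hi : i < L)
    (hl₁ : l₁ < 2 * L) (hl₂ : l₂ + L ≤ l₁) :
    Zpad L x ((i + l₁) % (2 * L)) * Zpad L x ((i + l₂) % (2 * L)) = 0 := by
  by_cases h : L ≤ i + l₁ ∧ i + l₁ < 2 * L
  · rw [Zpad_shift_mod_eq_zero (l := l₂) x hi (by omega) (by omega), mul_zero]
  · rw [Zpad_shift_mod_eq_zero x hi hl₁ h, zero_mul]

section Expansion

variable {L : ℕ} (σ : ℝ) (ym : ℕ → ℝ) (x : Fin L → ℝ)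

lemma loglik1_expand (l : ℕ) :
    loglik1 L σ ym l x = -(1 / (2 * σ ^ 2)) * ∑ i ∈ range L, ym i ^ 2 +
      1 / (2 * σ ^ 2) * ∑ i ∈ range L,
        (2 * ym i * Zpad L x ((i + l) % (2 * L)) - Zpad L x ((i + l) % (2 * L)) ^ 2) := by
  have h : ∑ i ∈ range L, (ym i - Zpad L x ((i + l) % (2 * L))) ^ 2 =
      ∑ i ∈ range L, ym i ^ 2 - ∑ i ∈ range L,
        (2 * ym i * Zpad L x ((i + l) % (2 * L)) - Zpad L x ((i + l) % (2 * L)) ^ 2) := by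
    rw [← sum_sub_distrib]
    exact sum_congr rfl fun i _ => by ring
  rw [loglik1, h]
  ring

lemma loglik2_expand {l₁ l₂ : ℕ} (hl₁ : l₁ < 2 * L) (hl₂ : l₂ + L ≤ l₁) :
    loglik2 L σ ym l₁ l₂ x = -(1 / (2 * σ ^ 2)) * ∑ i ∈ range L, ym i ^ 2 +
      1 / (2 * σ ^ 2) * ∑ i ∈ range L,
        (2 * ym i * Zpad L x ((i + l₁) % (2 * L)) - Zpad L x ((i + l₁) % (2 * L)) ^ 2) +
      1 / (2 * σ ^ 2) * ∑ i ∈ range L,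
        (2 * ym i * Zpad L x ((i + l₂) % (2 * L)) - Zpad L x ((i + l₂) % (2 * L)) ^ 2) := by
  have h : ∑ i ∈ range L,
      (ym i - Zpad L x ((i + l₁) % (2 * L)) - Zpad L x ((i + l₂) % (2 * L))) ^ 2 =
      ∑ i ∈ range L, ym i ^ 2 - ∑ i ∈ range L,
        (2 * ym i * Zpad L x ((i + l₁) % (2 * L)) - Zpad L x ((i + l₁) % (2 * L)) ^ 2) -
      ∑ i ∈ range L,
        (2 * ym i * Zpad L x ((i + l₂) % (2 * L)) - Zpad L x ((i + l₂) % (2 * L)) ^ 2) := by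
    rw [← sum_sub_distrib, ← sum_sub_distrib]
    refine sum_congr rfl fun i hi => ?_
    linear_combination
      2 * Zpad_shift_mul_Zpad_shift_eq_zero x (mem_range.mp hi) hl₁ hl₂
  rw [loglik2, h]
  ring

end Expansion

/-- The posterior weight of every placement in which some occurrence, at shift `l`, covers `x[j]`
(putting it on sample `j + L - l`), each weighted by `f l`. -/
def coverSum (L : ℕ) (wm : ℕ → ℝ) (vm : ℕ → ℕ → ℝ) (j : ℕ) (f : ℕ → ℝ) : ℝ :=
  (∑ l ∈ Icc (j + 1) (j + L), wm l * f l) +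
    (∑ l₁ ∈ Icc (L + 1) (j + L), ∑ l₂ ∈ Icc 1 (l₁ - L), vm l₁ l₂ * f l₁) +
    ∑ l₁ ∈ Icc (L + j + 1) (2 * L - 1), ∑ l₂ ∈ Icc (j + 1) (l₁ - L), vm l₁ l₂ * f l₂

section Regrouping

variable {L : ℕ} (x : Fin L → ℝ) (ym : ℕ → ℝ) (g : ℝ → ℝ → ℝ) (hg : ∀ y, g y 0 = 0)
include hg

lemma sum_single_shift_eq (wm : ℕ → ℝ) :
    ∑ l ∈ range (2 * L), wm l * ∑ i ∈ range L, g (ym i) (Zpad L x ((i + l) % (2 * L))) =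
      ∑ j : Fin L, ∑ l ∈ Icc ((j : ℕ) + 1) (j + L), wm l * g (ym (j + L - l)) (x j) := by
  simp_rw [mul_sum]
  rw [sum_sum_Zpad_shift _ (fun l hl => mem_range.mp hl) x (fun l i t => wm l * g (ym i) t)
    (by simp [hg])]
  refine sum_congr rfl fun j _ => sum_congr ?_ fun _ _ => rfl
  ext l
  simp only [mem_filter, mem_range, mem_Icc]
  omega

lemma sum_double_shift_fst_eq (vm : ℕ → ℕ → ℝ) :
    ∑ l₁ ∈ Icc (L + 1) (2 * L - 1), (∑ l₂ ∈ Icc 1 (l₁ - L), vm l₁ l₂) *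
        ∑ i ∈ range L, g (ym i) (Zpad L x ((i + l₁) % (2 * L))) =
      ∑ j : Fin L, ∑ l₁ ∈ Icc (L + 1) (j + L), ∑ l₂ ∈ Icc 1 (l₁ - L),
        vm l₁ l₂ * g (ym (j + L - l₁)) (x j) := by
  simp_rw [mul_sum]
  rw [sum_sum_Zpad_shift _ (fun l hl => by simp only [mem_Icc] at hl; omega) x
    (fun l i t => (∑ l₂ ∈ Icc 1 (l - L), vm l l₂) * g (ym i) t) (by simp [hg])]
  simp_rw [← sum_mul]
  refine sum_congr rfl fun j _ => sum_congr ?_ fun _ _ => rfl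
  ext l
  simp only [mem_filter, mem_Icc]
  omega

lemma sum_double_shift_snd_eq (vm : ℕ → ℕ → ℝ) :
    ∑ l₁ ∈ Icc (L + 1) (2 * L - 1), ∑ l₂ ∈ Icc 1 (l₁ - L),
        vm l₁ l₂ * ∑ i ∈ range L, g (ym i) (Zpad L x ((i + l₂) % (2 * L))) =
      ∑ j : Fin L, ∑ l₁ ∈ Icc (L + j + 1) (2 * L - 1), ∑ l₂ ∈ Icc ((j : ℕ) + 1) (l₁ - L),
        vm l₁ l₂ * g (ym (j + L - l₂)) (x j) := by
  simp_rw [mul_sum]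
  rw [sum_congr rfl fun l₁ hl₁ => sum_sum_Zpad_shift (Icc 1 (l₁ - L))
    (fun l hl => by simp only [mem_Icc] at hl hl₁; omega) x (fun l i t => vm l₁ l * g (ym i) t)
    (by simp [hg]), sum_comm]
  refine sum_congr rfl fun j _ => ?_
  have hfilter (l₁ : ℕ) (hl₁ : l₁ ∈ Icc (L + 1) (2 * L - 1)) :
      {l₂ ∈ Icc 1 (l₁ - L) | (j : ℕ) + 1 ≤ l₂ ∧ l₂ ≤ j + L} = Icc ((j : ℕ) + 1) (l₁ - L) := by
    ext l₂
    simp only [mem_filter, mem_Icc] at hl₁ ⊢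
    omega
  rw [sum_congr rfl fun l₁ hl₁ => by rw [hfilter l₁ hl₁]]
  refine (sum_subset (Icc_subset_Icc (by omega) le_rfl) fun l₁ hl₁ hl₁' => ?_).symm
  rw [Icc_eq_empty (by simp only [mem_Icc] at hl₁ hl₁'; omega), sum_empty]

end Regrouping

lemma segment_objective_eq {L : ℕ} (σ : ℝ) (ym wm : ℕ → ℝ) (vm : ℕ → ℕ → ℝ) (x : Fin L → ℝ) :
    (∑ l ∈ range (2 * L), wm l * loglik1 L σ ym l x) +
      ∑ l₁ ∈ Icc (L + 1) (2 * L - 1), ∑ l₂ ∈ Icc 1 (l₁ - L), vm l₁ l₂ * loglik2 L σ ym l₁ l₂ x =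
    -(1 / (2 * σ ^ 2)) * ((∑ l ∈ range (2 * L), wm l) +
        ∑ l₁ ∈ Icc (L + 1) (2 * L - 1), ∑ l₂ ∈ Icc 1 (l₁ - L), vm l₁ l₂) *
        ∑ i ∈ range L, ym i ^ 2 +
      1 / (2 * σ ^ 2) *
        ∑ j : Fin L, coverSum L wm vm j fun l => 2 * ym (j + L - l) * x j - x j ^ 2 := by
  have hg : ∀ y : ℝ, 2 * y * 0 - 0 ^ 2 = 0 := by simp
  have hW := sum_single_shift_eq x ym (fun y t => 2 * y * t - t ^ 2) hg wm
  have hV₁ := sum_double_shift_fst_eq x ym (fun y t => 2 * y * t - t ^ 2) hg vm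
  have hV₂ := sum_double_shift_snd_eq x ym (fun y t => 2 * y * t - t ^ 2) hg vm
  beta_reduce at hW hV₁ hV₂
  rw [sum_congr rfl fun l _ => by rw [loglik1_expand],
    sum_congr rfl fun l₁ hl₁ => sum_congr rfl fun l₂ hl₂ => by
      simp only [mem_Icc] at hl₁ hl₂
      rw [loglik2_expand σ ym x (by omega) (by omega)]]
  simp only [mul_add, sum_add_distrib, mul_left_comm _ (1 / (2 * σ ^ 2)), ← mul_sum, ← sum_mul]
  rw [hW, hV₁, hV₂]
  simp only [coverSum, sum_add_distrib]
  ring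

lemma coverSum_quadratic {L : ℕ} (wm : ℕ → ℝ) (vm : ℕ → ℕ → ℝ) (j : ℕ) (f : ℕ → ℝ) (t : ℝ) :
    coverSum L wm vm j (fun l => 2 * f l * t - t ^ 2) =
      2 * coverSum L wm vm j f * t - coverSum L wm vm j (fun _ => 1) * t ^ 2 := by
  have hf : (fun l => 2 * f l * t - t ^ 2) = fun l => 2 * t * f l - t ^ 2 * 1 := by
    ext l
    ring
  rw [hf]
  simp only [coverSum, mul_sub, sum_sub_distrib, mul_left_comm _ (2 * t),
    mul_left_comm _ (t ^ 2), ← mul_sum]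
  ring

lemma emNumer_eq_sum_coverSum (L Nd : ℕ) (y : ℕ → ℕ → ℝ) (w : ℕ → ℕ → ℝ)
    (v : ℕ → ℕ → ℕ → ℝ) (j : ℕ) :
    emNumer L Nd y w v j = ∑ m ∈ range Nd, coverSum L (w m) (v m) j fun l => y m (j + L - l) :=
  rfl

lemma emDenom_eq_sum_coverSum (L Nd : ℕ) (w : ℕ → ℕ → ℝ) (v : ℕ → ℕ → ℕ → ℝ) (j : ℕ) :
    emDenom L Nd w v j = ∑ m ∈ range Nd, coverSum L (w m) (v m) j fun _ => 1 := by
  simp only [emDenom, coverSum, mul_one]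

lemma emObjective_eq_quadratic (L : ℕ) (σ : ℝ) (Nd : ℕ) (y : ℕ → ℕ → ℝ) (w : ℕ → ℕ → ℝ)
    (v : ℕ → ℕ → ℕ → ℝ) : ∃ C, ∀ x : Fin L → ℝ, emObjective L σ Nd y w v x =
      C + 1 / (2 * σ ^ 2) * ∑ j : Fin L,
        (2 * emNumer L Nd y w v j * x j - emDenom L Nd w v j * x j ^ 2) := by
  refine ⟨∑ m ∈ range Nd, -(1 / (2 * σ ^ 2)) * ((∑ l ∈ range (2 * L), w m l) +
      ∑ l₁ ∈ Icc (L + 1) (2 * L - 1), ∑ l₂ ∈ Icc 1 (l₁ - L), v m l₁ l₂) *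
        ∑ i ∈ range L, y m i ^ 2, fun x => ?_⟩
  rw [emObjective, sum_congr rfl fun m _ => segment_objective_eq σ (y m) (w m) (v m) x,
    sum_add_distrib, ← mul_sum, sum_comm]
  congr 2
  refine sum_congr rfl fun j _ => ?_
  simp only [coverSum_quadratic, emNumer_eq_sum_coverSum, emDenom_eq_sum_coverSum, sum_sub_distrib,
    mul_sum, sum_mul]

lemma two_mul_mul_sub_mul_sq_eq {N D : ℝ} (hD : D ≠ 0) (t : ℝ) :
    2 * N * t - D * t ^ 2 = N ^ 2 / D - D * (t - N / D) ^ 2 := by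
  field_simp
  ring

lemma emObjective_eq_sub_sum_sq (L : ℕ) (σ : ℝ) (Nd : ℕ) (y : ℕ → ℕ → ℝ) (w : ℕ → ℕ → ℝ)
    (v : ℕ → ℕ → ℕ → ℝ) (hD : ∀ j : Fin L, emDenom L Nd w v j ≠ 0) :
    ∃ C, ∀ x : Fin L → ℝ, emObjective L σ Nd y w v x =
      C - ∑ j : Fin L, 1 / (2 * σ ^ 2) * emDenom L Nd w v j *
        (x j - emNumer L Nd y w v j / emDenom L Nd w v j) ^ 2 := by
  obtain ⟨C, hC⟩ := emObjective_eq_quadratic L σ Nd y w v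
  refine ⟨C + 1 / (2 * σ ^ 2) * ∑ j : Fin L, emNumer L Nd y w v j ^ 2 / emDenom L Nd w v j,
    fun x => ?_⟩
  rw [hC, sum_congr rfl fun j _ => two_mul_mul_sub_mul_sq_eq (hD j) (x j), sum_sub_distrib]
  simp only [mul_sub, mul_sum, mul_assoc]
  ring

theorem emObjective2_unique_maximizer_general
    (L : ℕ) (σ : ℝ) (hσ : 0 < σ) (Nd : ℕ)
    (y : ℕ → ℕ → ℝ) (w : ℕ → ℕ → ℝ) (v : ℕ → ℕ → ℕ → ℝ)
    (hD : ∀ j : Fin L, 0 < emDenom L Nd w v j) :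
    ConcaveOn ℝ Set.univ (emObjective L σ Nd y w v) ∧
    (∀ x : Fin L → ℝ, emObjective L σ Nd y w v x ≤ emObjective L σ Nd y w v
      (fun j : Fin L => emNumer L Nd y w v j / emDenom L Nd w v j)) ∧
    (∀ x : Fin L → ℝ,
      (∀ z : Fin L → ℝ, emObjective L σ Nd y w v z ≤ emObjective L σ Nd y w v x) →
      x = fun j : Fin L => emNumer L Nd y w v j / emDenom L Nd w v j) := by
  obtain ⟨C, hF⟩ := emObjective_eq_sub_sum_sq L σ Nd y w v fun j => (hD j).ne'
  have ha (j : Fin L) : 0 < 1 / (2 * σ ^ 2) * emDenom L Nd w v j :=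
    mul_pos (by positivity) (hD j)
  exact ⟨concaveOn_of_eq_const_sub_sum_mul_sq hF fun j => (ha j).le,
    le_of_eq_const_sub_sum_mul_sq hF fun j => (ha j).le,
    fun x hx => eq_of_eq_const_sub_sum_mul_sq hF ha (hx _)⟩

/-- Fix `L ≥ 1`, `σ > 0`, segments `y_0, …, y_{N_d−1} ∈ ℝ^L`, and nonnegative weights
`w_m[l]` and `v_m[l₁,l₂]`. If the denominators `D_j` are strictly positive for all
`0 ≤ j ≤ L−1`, then the M-step objective `F` of the approximate EM algorithm with up to two
signal occurrences per segment is concave with a unique global maximizer `x*` given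
coordinatewise by `x*[j] = emNumer j / D_j`. -/
theorem emObjective2_unique_maximizer
    (L : ℕ) (hL : 1 ≤ L) (σ : ℝ) (hσ : 0 < σ) (Nd : ℕ)
    (y : ℕ → ℕ → ℝ) (w : ℕ → ℕ → ℝ) (v : ℕ → ℕ → ℕ → ℝ)
    (hw : ∀ m l, 0 ≤ w m l) (hv : ∀ m l₁ l₂, 0 ≤ v m l₁ l₂)
    (hD : ∀ j : Fin L, 0 < emDenom L Nd w v j) :
    ConcaveOn ℝ Set.univ (emObjective L σ Nd y w v) ∧
    (∀ x : Fin L → ℝ, emObjective L σ Nd y w v x ≤ emObjective L σ Nd y w v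
      (fun j : Fin L => emNumer L Nd y w v j / emDenom L Nd w v j)) ∧
    (∀ x : Fin L → ℝ,
      (∀ z : Fin L → ℝ, emObjective L σ Nd y w v z ≤ emObjective L σ Nd y w v x) →
      x = fun j : Fin L => emNumer L Nd y w v j / emDenom L Nd w v j) :=
  emObjective2_unique_maximizer_general L σ hσ Nd y w v hD
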